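/- arXiv:0711.2669 — 8 statements merged into one kernel-verified Lean document; each statement's English description precedes it below -/
import Mathlib

section
/- Let α : R → A be a ring homomorphism between unital rings. Call an element s ∈ A left R-cofinite if A/As is a Noetherian left R-module via α, and let S_l be the set of left R-cofinite elements. Then S_l is multiplicatively closed. -/
/-!
Right multiplication by `t` induces an exact sequence of `A`-modules
`A ⧸ As → A ⧸ Ast → A ⧸ At → 0`. Restricting scalars along `α` keeps it exact, and a module
sitting between two Noetherian modules in an exact sequence is Noetherian.
-/

/-- A left ideal `L` of `A` is `R`-cofinite (via `α : R →+* A`) if `A ⧸ L` is a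
Noetherian left `R`-module, where the `R`-action is obtained by restriction of
scalars along `α`. -/
def RCofiniteIdeal {R A : Type*} [Ring R] [Ring A] (α : R →+* A)
    (L : Submodule A A) : Prop :=
  @IsNoetherian R (A ⧸ L) _ _ (Module.compHom _ α)

/-- `s ∈ A` is left `R`-cofinite if the principal left ideal `As` is `R`-cofinite,
i.e. `A ⧸ As` is a Noetherian left `R`-module via `α`. -/
def LeftCofinite {R A : Type*} [Ring R] [Ring A] (α : R →+* A) (s : A) : Prop :=
  RCofiniteIdeal α (Submodule.span A {s})

section

variable {R A : Type*} [Ring R] [Ring A] (α : R →+* A)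

theorem compatibleSMul_compHom (M N : Type*) [AddCommGroup M] [AddCommGroup N]
    [Module A M] [Module A N] :
    letI := Module.compHom M α
    letI := Module.compHom N α
    LinearMap.CompatibleSMul M N R A :=
  letI := Module.compHom M α
  letI := Module.compHom N α
  ⟨fun f r x => f.map_smul (α r) x⟩

theorem isNoetherian_compHom_of_range_eq_ker {M N P : Type*} [AddCommGroup M] [AddCommGroup N]
    [AddCommGroup P] [Module A M] [Module A N] [Module A P] (f : M →ₗ[A] N) (g : N →ₗ[A] P)
    (hfg : LinearMap.range f = LinearMap.ker g)
    (hM : @IsNoetherian R M _ _ (Module.compHom M α))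
    (hP : @IsNoetherian R P _ _ (Module.compHom P α)) :
    @IsNoetherian R N _ _ (Module.compHom N α) := by
  let := Module.compHom M α
  let := Module.compHom N α
  let := Module.compHom P α
  have := compatibleSMul_compHom α M N
  have := compatibleSMul_compHom α N P
  exact isNoetherian_of_range_eq_ker (f.restrictScalars R) (g.restrictScalars R)
    (by ext x; exact SetLike.ext_iff.mp hfg x)

theorem rCofiniteIdeal_top : RCofiniteIdeal α ⊤ := by
  let := Module.compHom (A ⧸ (⊤ : Submodule A A)) α
  exact inferInstanceAs (IsNoetherian R (A ⧸ (⊤ : Submodule A A)))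

theorem leftCofinite_one : LeftCofinite α 1 := by
  rw [LeftCofinite, (Submodule.span_singleton_eq_top_iff A 1).mpr fun a => ⟨a, mul_one a⟩]
  exact rCofiniteIdeal_top α

variable {α}

theorem RCofiniteIdeal.map_toSpanSingleton {I : Submodule A A} {t : A} (hI : RCofiniteIdeal α I)
    (ht : LeftCofinite α t) : RCofiniteIdeal α (I.map (LinearMap.toSpanSingleton A A t)) := by
  set J := I.map (LinearMap.toSpanSingleton A A t)
  have hJ_le : J ≤ Submodule.span A {t} := by
    rw [LinearMap.span_singleton_eq_range A A t]
    exact LinearMap.map_le_range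
  have hI_le : I ≤ LinearMap.ker (J.mkQ ∘ₗ LinearMap.toSpanSingleton A A t) := fun _ hx =>
    (Submodule.Quotient.mk_eq_zero J).mpr (Submodule.mem_map_of_mem hx)
  refine isNoetherian_compHom_of_range_eq_ker α (I.liftQ _ hI_le)
    (J.mapQ (Submodule.span A {t}) LinearMap.id hJ_le) ?_ hI ht
  rw [Submodule.range_liftQ, Submodule.ker_mapQ, LinearMap.range_comp, Submodule.comap_id,
    ← LinearMap.span_singleton_eq_range A A t]

theorem LeftCofinite.mul {s t : A} (hs : LeftCofinite α s) (ht : LeftCofinite α t) :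
    LeftCofinite α (s * t) := by
  have h := RCofiniteIdeal.map_toSpanSingleton hs ht
  rwa [Submodule.map_span, Set.image_singleton, LinearMap.toSpanSingleton_apply,
    smul_eq_mul] at h

end

/-- The set `S_l` of left `R`-cofinite elements of `A` is multiplicatively closed. -/
theorem leftCofinite_mul_closed {R A : Type*} [Ring R] [Ring A] (α : R →+* A) :
    LeftCofinite α 1 ∧
      ∀ s t : A, LeftCofinite α s → LeftCofinite α t → LeftCofinite α (s * t) :=
  ⟨leftCofinite_one α, fun _ _ => LeftCofinite.mul⟩
end

section
/- Let α : R → A be a ring homomorphism satisfying the property PC_l(α): every left ideal L of A with A/L Noetherian over R contains an element s with A/As Noetherian over R. Then for any s ∈ S_l, the left A-module A/As is S_l-torsion, i.e. for every c ∈ A there exists t ∈ S_l with tc ∈ As. -/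
/-- `PC_l(α)`: every `R`-cofinite left ideal of `A` contains a left `R`-cofinite element. -/
def PCl {R A : Type*} [Ring R] [Ring A] (α : R →+* A) : Prop :=
  ∀ L : Submodule A A, RCofiniteIdeal α L → ∃ s ∈ L, LeftCofinite α s

/-- Assume `PC_l(α)`. For any `s ∈ S_l` the left `A`-module `A ⧸ As` is `S_l`-torsion:
for every `c ∈ A` there is `t ∈ S_l` with `t * c ∈ As`. -/
theorem quotient_torsion_of_pcl {R A : Type*} [Ring R] [Ring A] (α : R →+* A)
    (hPC : PCl α) {s : A} (hs : LeftCofinite α s) (c : A) :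
    ∃ t : A, LeftCofinite α t ∧ t * c ∈ Submodule.span A {s} := by
  classical
  set I := Submodule.span A ({s} : Set A) with hI
  let f : A →ₗ[A] A ⧸ I := I.mkQ ∘ₗ LinearMap.toSpanSingleton A A c
  let L : Submodule A A := LinearMap.ker f
  have hL : RCofiniteIdeal α L := by
    letI : Module R (A ⧸ L) := Module.compHom _ α
    letI : Module R (A ⧸ I) := Module.compHom _ α
    haveI hNI : IsNoetherian R (A ⧸ I) := hs
    let fq : (A ⧸ L) →ₗ[A] A ⧸ I := L.liftQ f le_rfl
    have hinj : Function.Injective fq := by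
      rw [← LinearMap.ker_eq_bot, Submodule.ker_liftQ_eq_bot]
      exact le_rfl
    let g : (A ⧸ L) →ₗ[R] A ⧸ I :=
      { toFun := fq
        map_add' := fq.map_add
        map_smul' := fun r x => fq.map_smul (α r) x }
    exact isNoetherian_of_injective g hinj
  obtain ⟨t, htL, htc⟩ := hPC L hL
  refine ⟨t, htc, ?_⟩
  have : f t = 0 := htL
  have h2 : I.mkQ (t * c) = 0 := by
    simpa [f, LinearMap.toSpanSingleton, smul_eq_mul] using this
  rwa [← Submodule.Quotient.mk_eq_zero, ← Submodule.mkQ_apply] at *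
end

section
/- Let α : R → A be a ring homomorphism satisfying PC_l(α). Then S_l = {s ∈ A : A/As is Noetherian over R} is a left Ore set of A, i.e. for every s ∈ S_l and b ∈ A there exist t ∈ S_l and b' ∈ A with tb = b's. -/
/-- If `PC_l(α)` holds then `S_l` is a left Ore set of `A`: for `s ∈ S_l` and `b ∈ A`
there are `t ∈ S_l` and `b' ∈ A` with `t * b = b' * s`. -/
theorem leftCofinite_left_ore {R A : Type*} [Ring R] [Ring A] (α : R →+* A)
    (hPC : PCl α) :
    ∀ s : A, LeftCofinite α s → ∀ b : A,
      ∃ t b' : A, LeftCofinite α t ∧ t * b = b' * s := by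
  intro s hs b
  -- right multiplication by b as an A-linear map
  set f : A →ₗ[A] A := LinearMap.toSpanSingleton A A b with hf
  set P : Submodule A A := Submodule.span A {s} with hP
  set L : Submodule A A := Submodule.comap f P with hL
  -- induced injective A-linear map A⧸L → A⧸P
  have hle : L ≤ Submodule.comap f P := le_rfl
  set g : (A ⧸ L) →ₗ[A] (A ⧸ P) := Submodule.mapQ L P f hle with hg
  have hginj : Function.Injective g := by
    rw [← LinearMap.ker_eq_bot]
    ext x
    simp only [LinearMap.mem_ker, Submodule.mem_bot]
    obtain ⟨a, rfl⟩ := Submodule.Quotient.mk_surjective L x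
    constructor
    · intro hx
      have : f a ∈ P := by
        rwa [hg, Submodule.mapQ_apply, Submodule.Quotient.mk_eq_zero] at hx
      rw [Submodule.Quotient.mk_eq_zero]
      exact this
    · intro hx; rw [hx]; simp
  -- L is R-cofinite
  have hLcf : RCofiniteIdeal α L := by
    letI mQ : Module R (A ⧸ P) := Module.compHom _ α
    letI mL : Module R (A ⧸ L) := Module.compHom _ α
    haveI : IsNoetherian R (A ⧸ P) := hs
    have hsmul : ∀ (r : R) (x : A ⧸ L), g ((α r) • x) = (α r) • g x := fun r x =>
      g.map_smul (α r) x
    let g' : (A ⧸ L) →ₗ[R] (A ⧸ P) :=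
      { toFun := g
        map_add' := g.map_add
        map_smul' := fun r x => hsmul r x }
    exact isNoetherian_of_injective g' hginj
  obtain ⟨t, htL, htcf⟩ := hPC L hLcf
  have : f t ∈ P := htL
  rw [Submodule.mem_span_singleton] at this
  obtain ⟨b', hb'⟩ := this
  refine ⟨t, b', htcf, ?_⟩
  have : f t = t * b := by simp [hf, LinearMap.toSpanSingleton_apply, smul_eq_mul]
  rw [← this, ← hb']; simp [smul_eq_mul]
end

section
/- Let α : R → A be a ring homomorphism satisfying PC_l(α), and let M be a Noetherian left A-module. Then M is Noetherian as an R-module if and only if M is S_l-torsion (every element of M is annihilated by some element of S_l). -/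
section CompHom

variable {R A M N : Type*} [Ring R] [Ring A] [AddCommGroup M] [AddCommGroup N]
  [Module A M] [Module A N] (α : R →+* A)

def LinearMap.restrictScalarsCompHom (f : M →ₗ[A] N) :
    @LinearMap R R _ _ (RingHom.id R) M N _ _ (Module.compHom M α) (Module.compHom N α) :=
  letI := Module.compHom M α
  letI := Module.compHom N α
  { toFun := f, map_add' := f.map_add, map_smul' := fun r x => f.map_smul (α r) x }

theorem isNoetherian_compHom_of_surjective (f : M →ₗ[A] N) (hf : Function.Surjective f)
    (h : @IsNoetherian R M _ _ (Module.compHom M α)) :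
    @IsNoetherian R N _ _ (Module.compHom N α) := by
  let _ := Module.compHom M α
  let _ := Module.compHom N α
  exact isNoetherian_of_surjective (f.restrictScalarsCompHom α) (LinearMap.range_eq_top.mpr hf)

theorem isNoetherian_compHom_of_injective (f : M →ₗ[A] N) (hf : Function.Injective f)
    (h : @IsNoetherian R N _ _ (Module.compHom N α)) :
    @IsNoetherian R M _ _ (Module.compHom M α) := by
  let _ := Module.compHom M α
  let _ := Module.compHom N α
  exact isNoetherian_of_injective (f.restrictScalarsCompHom α) hf

end CompHom

section Torsion

variable {R A M : Type*} [Ring R] [Ring A] [AddCommGroup M] [Module A M]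

theorem rCofiniteIdeal_torsionOf (α : R →+* A) (h : @IsNoetherian R M _ _ (Module.compHom M α))
    (m : M) : RCofiniteIdeal α (Ideal.torsionOf A M m) :=
  isNoetherian_compHom_of_injective α
    ((A ∙ m).subtype ∘ₗ (Ideal.quotTorsionOfEquivSpanSingleton A M m).toLinearMap)
    (Subtype.val_injective.comp (LinearEquiv.injective _)) h

theorem exists_leftCofinite_smul_eq_zero {α : R →+* A} (hPC : PCl α)
    (h : @IsNoetherian R M _ _ (Module.compHom M α)) (m : M) :
    ∃ s : A, LeftCofinite α s ∧ s • m = 0 := by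
  obtain ⟨s, hsm, hs⟩ := hPC _ (rCofiniteIdeal_torsionOf α h m)
  exact ⟨s, hs, (Ideal.mem_torsionOf_iff m s).mp hsm⟩

theorem exists_surjective_pi_quotient_span_singleton {ι : Type*} [Fintype ι] [DecidableEq ι]
    {m : ι → M} (hm : Submodule.span A (Set.range m) = ⊤) {s : ι → A}
    (hs : ∀ i, s i • m i = 0) :
    ∃ f : (∀ i, A ⧸ Submodule.span A {s i}) →ₗ[A] M, Function.Surjective f := by
  have hle : ∀ i, Submodule.span A {s i} ≤ (LinearMap.toSpanSingleton A M (m i)).ker := fun i =>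
    (Submodule.span_singleton_le_iff_mem _ _).mpr (hs i)
  let f := LinearMap.lsum A (fun i => A ⧸ Submodule.span A {s i}) ℕ fun i =>
    (Submodule.span A {s i}).liftQ (LinearMap.toSpanSingleton A M (m i)) (hle i)
  refine ⟨f, LinearMap.range_eq_top.mp (eq_top_iff.mpr ?_)⟩
  rw [← hm, Submodule.span_le]
  rintro _ ⟨i, rfl⟩
  refine ⟨Pi.single i (Submodule.Quotient.mk 1), ?_⟩
  change f _ = _
  rw [LinearMap.lsum_piSingle, Submodule.liftQ_apply, LinearMap.toSpanSingleton_apply, one_smul]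

theorem isNoetherian_compHom_of_leftCofinite_smul_eq_zero [Module.Finite A M] {α : R →+* A}
    (h : ∀ m : M, ∃ s : A, LeftCofinite α s ∧ s • m = 0) :
    @IsNoetherian R M _ _ (Module.compHom M α) := by
  obtain ⟨n, m, hm⟩ := Module.Finite.exists_fin (R := A) (M := M)
  choose s hs hsm using fun i => h (m i)
  obtain ⟨f, hf⟩ := exists_surjective_pi_quotient_span_singleton hm hsm
  let _ := fun i => Module.compHom (A ⧸ Submodule.span A {s i}) α
  have : ∀ i, IsNoetherian R (A ⧸ Submodule.span A {s i}) := hs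
  exact isNoetherian_compHom_of_surjective α f hf isNoetherian_pi

end Torsion

/-- Assume `PC_l(α)` and let `M` be a Noetherian left `A`-module. Then `M` is
Noetherian as an `R`-module (via `α`) iff `M` is `S_l`-torsion. -/
theorem noetherian_iff_torsion_of_pcl {R A M : Type*} [Ring R] [Ring A]
    [AddCommGroup M] [Module A M] (α : R →+* A) (hPC : PCl α)
    (hM : IsNoetherian A M) :
    (@IsNoetherian R M _ _ (Module.compHom M α)) ↔
      ∀ m : M, ∃ s : A, LeftCofinite α s ∧ s • m = 0 :=
  ⟨exists_leftCofinite_smul_eq_zero hPC, isNoetherian_compHom_of_leftCofinite_smul_eq_zero⟩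
end

section
/- Let α_i : R_i → A_i (i = 1, 2) be ring homomorphisms and α = α_1 × α_2 : R_1 × R_2 → A_1 × A_2 their product. Then PC_l(α) holds if and only if PC_l(α_1) and PC_l(α_2) both hold. -/
/-!
Every left ideal of `A₁ × A₂` is `L₁ × L₂`, and `(A₁ × A₂) ⧸ (L₁ × L₂) ≅ A₁ ⧸ L₁ × A₂ ⧸ L₂` with
`R₁ × R₂` acting componentwise. Since `R₁ × R₂` acts on `A₁ ⧸ L₁` through the surjection onto
`R₁`, this product is Noetherian over `R₁ × R₂` exactly when each factor is Noetherian over its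
own ring. As `A (s₁, s₂) = A₁ s₁ × A₂ s₂`, both cofiniteness of left ideals and of elements split
into the two factors; to go from the product down to `A₁`, pad `L₁` to `L₁ × A₂`.
-/

theorem isNoetherian_compHom_iff_of_surjective {R S M : Type*} [Semiring R] [Semiring S]
    [AddCommMonoid M] [Module S M] (f : R →+* S) (hf : Function.Surjective f) :
    @IsNoetherian R M _ _ (Module.compHom M f) ↔ IsNoetherian S M := by
  let _ := Module.compHom M f
  have : RingHomSurjective f := ⟨hf⟩
  let idₛₗ : M →ₛₗ[f] M :=
    { toFun := id, map_add' := fun _ _ ↦ rfl, map_smul' := fun _ _ ↦ rfl }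
  refine ⟨fun _ ↦ isNoetherian_of_surjective idₛₗ
    (LinearMap.range_eq_top.2 Function.surjective_id), fun h ↦ ?_⟩
  let toS : Submodule R M → Submodule S M := fun N ↦
    { N.toAddSubmonoid with
      smul_mem' := fun s m hm ↦ by
        obtain ⟨r, rfl⟩ := hf s
        exact N.smul_mem r hm }
  have : StrictMono toS := fun _ _ hlt ↦ hlt
  rw [isNoetherian_iff'] at h ⊢
  exact this.wellFoundedGT

theorem isNoetherian_prod_iff {R M N : Type*} [Ring R] [AddCommGroup M] [AddCommGroup N]
    [Module R M] [Module R N] :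
    IsNoetherian R (M × N) ↔ IsNoetherian R M ∧ IsNoetherian R N :=
  ⟨fun _ ↦ ⟨isNoetherian_of_surjective (LinearMap.fst R M N)
      (LinearMap.range_eq_top.2 LinearMap.fst_surjective),
    isNoetherian_of_surjective (LinearMap.snd R M N)
      (LinearMap.range_eq_top.2 LinearMap.snd_surjective)⟩,
    fun ⟨_, _⟩ ↦ inferInstance⟩

theorem LinearEquiv.isNoetherian_compHom_iff {R A M N : Type*} [Semiring R] [Semiring A]
    [AddCommMonoid M] [AddCommMonoid N] [Module A M] [Module A N] (α : R →+* A) (e : M ≃ₗ[A] N) :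
    @IsNoetherian R M _ _ (Module.compHom M α) ↔ @IsNoetherian R N _ _ (Module.compHom N α) := by
  let _ := Module.compHom M α
  let _ := Module.compHom N α
  let eR : M ≃ₗ[R] N := { e with map_smul' := fun r x ↦ e.map_smul (α r) x }
  exact eR.isNoetherian_iff

theorem isNoetherian_prod_prod_iff {R₁ R₂ M₁ M₂ : Type*} [Ring R₁] [Ring R₂]
    [AddCommGroup M₁] [AddCommGroup M₂] [Module R₁ M₁] [Module R₂ M₂] :
    let _ := Module.compHom M₁ (RingHom.fst R₁ R₂)
    let _ := Module.compHom M₂ (RingHom.snd R₁ R₂)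
    IsNoetherian (R₁ × R₂) (M₁ × M₂) ↔ IsNoetherian R₁ M₁ ∧ IsNoetherian R₂ M₂ :=
  let _ := Module.compHom M₁ (RingHom.fst R₁ R₂)
  let _ := Module.compHom M₂ (RingHom.snd R₁ R₂)
  isNoetherian_prod_iff.trans <| and_congr
    (isNoetherian_compHom_iff_of_surjective _ Prod.fst_surjective)
    (isNoetherian_compHom_iff_of_surjective _ Prod.snd_surjective)

theorem rcofiniteIdeal_top {R A : Type*} [Ring R] [Ring A] (α : R →+* A) :
    RCofiniteIdeal α ⊤ := by
  let _ := Module.compHom (A ⧸ (⊤ : Ideal A)) α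
  have : Subsingleton (A ⧸ (⊤ : Ideal A)) := Submodule.Quotient.subsingleton_iff.2 rfl
  exact isNoetherian_of_finite R _

section ProductRing

variable {R₁ R₂ A₁ A₂ : Type*} [Ring R₁] [Ring R₂] [Ring A₁] [Ring A₂]

theorem rcofiniteIdeal_prod_iff (α₁ : R₁ →+* A₁) (α₂ : R₂ →+* A₂) (L₁ : Ideal A₁)
    (L₂ : Ideal A₂) :
    RCofiniteIdeal (α₁.prodMap α₂) (Ideal.prod L₁ L₂) ↔
      RCofiniteIdeal α₁ L₁ ∧ RCofiniteIdeal α₂ L₂ := by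
  let _ := Module.compHom (A₁ ⧸ L₁) (RingHom.fst A₁ A₂)
  let _ := Module.compHom (A₂ ⧸ L₂) (RingHom.snd A₁ A₂)
  let f : (A₁ × A₂) →ₗ[A₁ × A₂] (A₁ ⧸ L₁) × (A₂ ⧸ L₂) :=
    (LinearMap.toSpanSingleton _ _ (Submodule.Quotient.mk 1)).prod
      (LinearMap.toSpanSingleton _ _ (Submodule.Quotient.mk 1))
  have hf (x : A₁ × A₂) : f x = (Submodule.Quotient.mk x.1, Submodule.Quotient.mk x.2) :=
    Prod.ext (congrArg Submodule.Quotient.mk (mul_one x.1))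
      (congrArg Submodule.Quotient.mk (mul_one x.2))
  have hker : LinearMap.ker f = Ideal.prod L₁ L₂ := by
    ext x
    simp only [LinearMap.mem_ker, hf, Prod.mk_eq_zero, Submodule.Quotient.mk_eq_zero,
      Ideal.mem_prod]
  have hsurj : Function.Surjective f := by
    rintro ⟨⟨x₁⟩, ⟨x₂⟩⟩
    exact ⟨(x₁, x₂), hf _⟩
  let e := (Submodule.quotEquivOfEq _ _ hker.symm).trans (f.quotKerEquivOfSurjective hsurj)
  let _ := Module.compHom (A₁ ⧸ L₁) α₁
  let _ := Module.compHom (A₂ ⧸ L₂) α₂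
  exact (e.isNoetherian_compHom_iff _).trans isNoetherian_prod_prod_iff

theorem leftCofinite_prod_iff (α₁ : R₁ →+* A₁) (α₂ : R₂ →+* A₂) (s : A₁ × A₂) :
    LeftCofinite (α₁.prodMap α₂) s ↔ LeftCofinite α₁ s.1 ∧ LeftCofinite α₂ s.2 := by
  have hspan : Ideal.span {s} = Ideal.prod (Ideal.span {s.1}) (Ideal.span {s.2}) := by
    rw [← Ideal.span_prod (by simp), Set.singleton_prod_singleton]
  rw [LeftCofinite, ← Ideal.span, hspan, rcofiniteIdeal_prod_iff]
  rfl

end ProductRing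

/-- `PC_l` of a product of two ring homomorphisms holds iff it holds for each factor. -/
theorem pcl_prod_iff {R₁ R₂ A₁ A₂ : Type*} [Ring R₁] [Ring R₂] [Ring A₁] [Ring A₂]
    (α₁ : R₁ →+* A₁) (α₂ : R₂ →+* A₂) :
    PCl (α₁.prodMap α₂) ↔ PCl α₁ ∧ PCl α₂ := by
  refine ⟨fun h ↦ ⟨fun L₁ hL₁ ↦ ?_, fun L₂ hL₂ ↦ ?_⟩, fun ⟨h₁, h₂⟩ L hL ↦ ?_⟩
  · obtain ⟨s, hs, hcof⟩ := h (Ideal.prod L₁ ⊤)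
      ((rcofiniteIdeal_prod_iff α₁ α₂ _ _).2 ⟨hL₁, rcofiniteIdeal_top α₂⟩)
    exact ⟨s.1, hs.1, ((leftCofinite_prod_iff α₁ α₂ s).1 hcof).1⟩
  · obtain ⟨s, hs, hcof⟩ := h (Ideal.prod ⊤ L₂)
      ((rcofiniteIdeal_prod_iff α₁ α₂ _ _).2 ⟨rcofiniteIdeal_top α₁, hL₂⟩)
    exact ⟨s.2, hs.2, ((leftCofinite_prod_iff α₁ α₂ s).1 hcof).2⟩
  · rw [Ideal.ideal_prod_eq L, rcofiniteIdeal_prod_iff] at hL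
    obtain ⟨s₁, hs₁, hcof₁⟩ := h₁ _ hL.1
    obtain ⟨s₂, hs₂, hcof₂⟩ := h₂ _ hL.2
    refine ⟨(s₁, s₂), ?_, (leftCofinite_prod_iff α₁ α₂ _).2 ⟨hcof₁, hcof₂⟩⟩
    rw [Ideal.ideal_prod_eq L]
    exact ⟨hs₁, hs₂⟩
end

section
/- Let R →^β A_0 →^γ A_1 be ring homomorphisms with α = γ ∘ β, and suppose A_0 is Noetherian as a left R-module via β. Then PC_l(α) holds if and only if PC_l(γ) holds. -/
/-- A finitely generated `A₀`-module is a quotient of some `A₀ⁿ`. -/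
theorem isNoetherian_iff_of_isScalarTower {R A₀ M : Type*} [Ring R] [Ring A₀] [AddCommGroup M]
    [Module R A₀] [Module A₀ M] [Module R M] [IsScalarTower R A₀ M] [IsScalarTower R A₀ A₀]
    [IsNoetherian R A₀] : IsNoetherian R M ↔ IsNoetherian A₀ M := by
  refine ⟨isNoetherian_of_tower R, fun _ => ?_⟩
  obtain ⟨n, f, hf⟩ := Module.Finite.exists_fin' A₀ M
  exact isNoetherian_of_surjective (f.restrictScalars R) (LinearMap.range_eq_top.mpr hf)

theorem rCofiniteIdeal_comp_iff {R A₀ A₁ : Type*} [Ring R] [Ring A₀] [Ring A₁]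
    (β : R →+* A₀) (γ : A₀ →+* A₁)
    (hA₀ : @IsNoetherian R A₀ _ _ (Module.compHom A₀ β)) (L : Submodule A₁ A₁) :
    RCofiniteIdeal (γ.comp β) L ↔ RCofiniteIdeal γ L := by
  let : Module R A₀ := Module.compHom A₀ β
  let : Module R (A₁ ⧸ L) := Module.compHom _ (γ.comp β)
  let : Module A₀ (A₁ ⧸ L) := Module.compHom _ γ
  have : IsScalarTower R A₀ A₀ := ⟨fun r a b => mul_assoc (β r) a b⟩
  have : IsScalarTower R A₀ (A₁ ⧸ L) := ⟨fun r a x => by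
    change γ (β r * a) • x = γ (β r) • γ a • x
    rw [map_mul, mul_smul]⟩
  exact isNoetherian_iff_of_isScalarTower

/-- Let `R →β A₀ →γ A₁` with `α = γ ∘ β`, and suppose `A₀` is Noetherian as a left
`R`-module via `β`. Then `PC_l(α)` holds iff `PC_l(γ)` holds. -/
theorem pcl_comp_iff_of_noetherian {R A₀ A₁ : Type*} [Ring R] [Ring A₀] [Ring A₁]
    (β : R →+* A₀) (γ : A₀ →+* A₁)
    (hA₀ : @IsNoetherian R A₀ _ _ (Module.compHom A₀ β)) :
    PCl (γ.comp β) ↔ PCl γ := by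
  simp only [PCl, LeftCofinite, rCofiniteIdeal_comp_iff β γ hA₀]
end

section
/- Every ring automorphism σ of the matrix ring M_n(D) over a skew field D decomposes as σ = Int(C) ∘ M_n(γ), where γ is a ring automorphism of D, M_n(γ) is the entrywise application of γ, and Int(C) is conjugation by some invertible matrix C ∈ M_n(D). -/
/-!
The images `σ(Eᵢᵢ)` of the diagonal matrix units are orthogonal idempotents summing to `1`, and
any two of them are conjugate by images of matrix units. Hence `Dⁿ`, viewed as a right
`D`-vector space (a `Dᵐᵒᵖ`-module), splits into `n` summands `σ(Eᵢᵢ) Dⁿ` of equal dimension, so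
`σ(E₀₀) Dⁿ` is a line `v D`. Each `σ(d E₀₀)` preserves this line, acting as `v ↦ v γ(d)`, and
`γ` is a ring endomorphism of `D`. The matrix `C` whose `k`-th column is `σ(Eₖ₀) v` satisfies
`σ(A) C = C (A.map γ)`; it is invertible because every vector has the form `σ(B) v`, and `γ` is
onto because `σ` is.
-/

open Module Matrix MulOpposite

section Dimension

variable {K V ι : Type*} [DivisionRing K] [AddCommGroup V] [Module K V] [Fintype ι]

theorem CompleteOrthogonalIdempotents.finrank_eq_sum_finrank_range [FiniteDimensional K V]
    {e : ι → Module.End K V} (he : CompleteOrthogonalIdempotents e) :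
    finrank K V = ∑ i, finrank K (LinearMap.range (e i)) := by
  classical
  let project : V →ₗ[K] Π i, LinearMap.range (e i) := .pi fun i ↦ (e i).rangeRestrict
  let sum : (Π i, LinearMap.range (e i)) →ₗ[K] V :=
    ∑ i, (LinearMap.range (e i)).subtype ∘ₗ LinearMap.proj i
  have project_sum : project ∘ₗ sum = .id := by
    refine LinearMap.ext fun x ↦ funext fun i ↦ Subtype.ext ?_
    choose y hy using fun j ↦ (x j).2
    simp [project, sum, ← hy, ← Module.End.mul_apply, he.1.mul_eq, DFunLike.ite_apply]
  have sum_project : sum ∘ₗ project = .id := by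
    ext x
    simp [sum, project, ← LinearMap.sum_apply, he.complete]
  rw [(LinearEquiv.ofLinearMap project sum project_sum sum_project).finrank_eq,
    finrank_pi_fintype]

theorem LinearMap.finrank_range_mul_mul_le [FiniteDimensional K V] (a e b : Module.End K V) :
    finrank K (LinearMap.range (a * e * b)) ≤ finrank K (LinearMap.range e) :=
  calc finrank K (LinearMap.range (a * e * b))
      ≤ finrank K (LinearMap.range (a * e)) := Submodule.finrank_mono (range_comp_le_range _ _)
    _ = finrank K ((LinearMap.range e).map a) := by rw [Module.End.mul_eq_comp, range_comp]
    _ ≤ finrank K (LinearMap.range e) := Submodule.finrank_map_le _ _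

theorem Matrix.completeOrthogonalIdempotents_single [DecidableEq ι] (R : Type*) [Semiring R] :
    CompleteOrthogonalIdempotents fun i : ι ↦ single i i (1 : R) :=
  CompleteOrthogonalIdempotents.iff_ortho_complete.mpr
    ⟨fun _ _ hij ↦ single_mul_single_of_ne _ _ _ _ hij _, sum_single_one⟩

theorem Matrix.finrank_eq_card_mul_finrank_range_single [FiniteDimensional K V] [DecidableEq ι]
    {R : Type*} [Semiring R] (ρ : Matrix ι ι R →+* Module.End K V) (i : ι) :
    finrank K V = Fintype.card ι * finrank K (LinearMap.range (ρ (single i i 1))) := by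
  have conj (j k : ι) :
      ρ (single j j 1) = ρ (single j k 1) * ρ (single k k 1) * ρ (single k j 1) := by
    simp only [← map_mul, single_mul_single_same, mul_one]
  have finrank_eq (j : ι) : finrank K (LinearMap.range (ρ (single j j 1))) =
      finrank K (LinearMap.range (ρ (single i i 1))) :=
    le_antisymm (conj j i ▸ LinearMap.finrank_range_mul_mul_le _ _ _)
      (conj i j ▸ LinearMap.finrank_range_mul_mul_le _ _ _)
  rw [((completeOrthogonalIdempotents_single R).map ρ).finrank_eq_sum_finrank_range]
  simp [finrank_eq]

end Dimension

section RingAut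

variable {D ι : Type*} [DivisionRing D] [Fintype ι] [DecidableEq ι]

instance : FiniteDimensional Dᵐᵒᵖ D := .equiv (opLinearEquiv Dᵐᵒᵖ).symm

theorem finrank_mulOpposite_self : finrank Dᵐᵒᵖ D = 1 :=
  (opLinearEquiv Dᵐᵒᵖ).finrank_eq.trans (finrank_self _)

theorem Matrix.exists_mulVec_eq {v : ι → D} (hv : v ≠ 0) (w : ι → D) :
    ∃ M : Matrix ι ι D, M *ᵥ v = w := by
  obtain ⟨k, hk⟩ := Function.ne_iff.mp hv
  refine ⟨vecMulVec w (Pi.single k (v k)⁻¹), ?_⟩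
  simp [vecMulVec_mulVec, single_dotProduct, inv_mul_cancel₀ hk]

theorem RingEquiv.finrank_range_single_eq_one (σ : Matrix ι ι D ≃+* Matrix ι ι D) (i₀ : ι) :
    finrank Dᵐᵒᵖ (LinearMap.range (Module.toModuleEnd Dᵐᵒᵖ (ι → D) (σ (single i₀ i₀ 1)))) = 1 := by
  have h := finrank_eq_card_mul_finrank_range_single
    ((Module.toModuleEnd Dᵐᵒᵖ (ι → D)).comp σ.toRingHom) i₀
  have : Nonempty ι := ⟨i₀⟩
  simp only [finrank_pi_fintype, finrank_mulOpposite_self, Finset.sum_const, Finset.card_univ,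
    smul_eq_mul, mul_one] at h
  exact (Nat.mul_eq_left Fintype.card_ne_zero).mp h.symm

structure IsCornerEigenvector (σ : Matrix ι ι D ≃+* Matrix ι ι D) (i₀ : ι) (v : ι → D) :
    Prop where
  ne_zero : v ≠ 0
  mulVec_eq_self : σ (single i₀ i₀ 1) *ᵥ v = v
  exists_mulVec_eq_smul (d : D) : ∃ c : D, σ (single i₀ i₀ d) *ᵥ v = op c • v

theorem RingEquiv.exists_isCornerEigenvector (σ : Matrix ι ι D ≃+* Matrix ι ι D) (i₀ : ι) :
    ∃ v, IsCornerEigenvector σ i₀ v := by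
  have hrank := σ.finrank_range_single_eq_one i₀
  obtain ⟨_, ⟨x, rfl⟩, hv⟩ :=
    Submodule.exists_mem_ne_zero_of_ne_bot (Submodule.one_le_finrank_iff.mp hrank.ge)
  have fixed (d : D) (w : ι → D) :
      σ (single i₀ i₀ 1) *ᵥ (σ (single i₀ i₀ d) *ᵥ w) = σ (single i₀ i₀ d) *ᵥ w := by
    rw [mulVec_mulVec, ← map_mul, single_mul_single_same, one_mul]
  refine ⟨σ (single i₀ i₀ 1) *ᵥ x, hv, fixed 1 x, fun d ↦ ?_⟩
  have hmem : σ (single i₀ i₀ d) *ᵥ (σ (single i₀ i₀ 1) *ᵥ x) ∈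
      LinearMap.range (Module.toModuleEnd Dᵐᵒᵖ (ι → D) (σ (single i₀ i₀ 1))) :=
    ⟨_, fixed d _⟩
  rw [eq_span_singleton_of_mem_of_finrank_eq_one hrank (LinearMap.mem_range_self _ x) hv,
    Submodule.mem_span_singleton] at hmem
  obtain ⟨c, hc⟩ := hmem
  exact ⟨c.unop, hc.symm⟩

def cornerMatrix (σ : Matrix ι ι D ≃+* Matrix ι ι D) (i₀ : ι) (v : ι → D) : Matrix ι ι D :=
  of fun i k ↦ (σ (single k i₀ 1) *ᵥ v) i

namespace IsCornerEigenvector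

variable {σ : Matrix ι ι D ≃+* Matrix ι ι D} {i₀ : ι} {v : ι → D}
  (hv : IsCornerEigenvector σ i₀ v)
include hv

theorem op_smul_injective : Function.Injective fun c : D ↦ op c • v :=
  (smul_left_injective Dᵐᵒᵖ hv.ne_zero).comp op_injective

noncomputable def scalar (d : D) : D :=
  (hv.exists_mulVec_eq_smul d).choose

theorem mulVec_single_eq_smul_scalar (d : D) :
    σ (single i₀ i₀ d) *ᵥ v = op (hv.scalar d) • v :=
  (hv.exists_mulVec_eq_smul d).choose_spec

noncomputable def ringHom : D →+* D where
  toFun := hv.scalar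
  map_one' := hv.op_smul_injective <| by
    simp only [← hv.mulVec_single_eq_smul_scalar, hv.mulVec_eq_self, op_one, one_smul]
  map_mul' a b := hv.op_smul_injective <| by
    simp only
    rw [← hv.mulVec_single_eq_smul_scalar, ← single_mul_single_same a i₀ i₀ i₀ b, map_mul,
      ← mulVec_mulVec, hv.mulVec_single_eq_smul_scalar b, mulVec_smul,
      hv.mulVec_single_eq_smul_scalar a, smul_smul, ← op_mul]
  map_zero' := hv.op_smul_injective <| by
    simp only [← hv.mulVec_single_eq_smul_scalar, single_zero, map_zero, zero_mulVec, op_zero,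
      zero_smul]
  map_add' a b := hv.op_smul_injective <| by
    simp only [← hv.mulVec_single_eq_smul_scalar, single_add, map_add, add_mulVec, op_add,
      add_smul]

theorem mulVec_single_eq_smul (d : D) :
    σ (single i₀ i₀ d) *ᵥ v = op (hv.ringHom d) • v :=
  hv.mulVec_single_eq_smul_scalar d

theorem mulVec_eq (B : Matrix ι ι D) :
    σ B *ᵥ v = cornerMatrix σ i₀ v *ᵥ fun j ↦ hv.ringHom (B j i₀) := by
  have column : B * single i₀ i₀ 1 = ∑ j, single j i₀ 1 * single i₀ i₀ (B j i₀) :=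
    calc B * single i₀ i₀ 1 = (∑ j, single j i₀ 1 * single i₀ j 1) * B * single i₀ i₀ 1 := by
          simp [sum_single_one]
      _ = ∑ j, single j i₀ 1 * (single i₀ j 1 * B * single i₀ i₀ 1) := by
          simp only [Finset.sum_mul, Matrix.mul_assoc]
      _ = ∑ j, single j i₀ 1 * single i₀ i₀ (B j i₀) := by
          simp only [single_mul_mul_single, one_mul, mul_one]
  calc σ B *ᵥ v = σ (B * single i₀ i₀ 1) *ᵥ v := by
        rw [map_mul, ← mulVec_mulVec, hv.mulVec_eq_self]
    _ = ∑ j, σ (single j i₀ 1) *ᵥ (σ (single i₀ i₀ (B j i₀)) *ᵥ v) := by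
        rw [column, map_sum, sum_mulVec]
        simp only [map_mul, mulVec_mulVec]
    _ = ∑ j, op (hv.ringHom (B j i₀)) • (σ (single j i₀ 1) *ᵥ v) := by
        simp [hv.mulVec_single_eq_smul, mulVec_smul]
    _ = cornerMatrix σ i₀ v *ᵥ fun j ↦ hv.ringHom (B j i₀) := by
        rw [mulVec_eq_sum]
        rfl

theorem map_mul_cornerMatrix (A : Matrix ι ι D) :
    σ A * cornerMatrix σ i₀ v = cornerMatrix σ i₀ v * A.map hv.ringHom := by
  refine ext_of_mulVec_single fun k ↦ ?_
  rw [← mulVec_mulVec, ← mulVec_mulVec, Matrix.mulVec_single_one, Matrix.mulVec_single_one]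
  calc σ A *ᵥ (cornerMatrix σ i₀ v).col k = σ (A * single k i₀ 1) *ᵥ v := by
        rw [map_mul, ← mulVec_mulVec]
        rfl
    _ = cornerMatrix σ i₀ v *ᵥ (A.map hv.ringHom).col k := by
        rw [hv.mulVec_eq]
        simp only [mul_single_apply_same, mul_one]
        rfl

theorem exists_mul_cornerMatrix_eq_one : ∃ C', cornerMatrix σ i₀ v * C' = 1 :=
  mulVec_surjective_iff_exists_right_inverse.mp fun w ↦ by
    obtain ⟨M, hM⟩ := exists_mulVec_eq hv.ne_zero w
    obtain ⟨B, rfl⟩ := σ.surjective M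
    exact ⟨_, (hv.mulVec_eq B).symm.trans hM⟩

end IsCornerEigenvector

end RingAut

theorem Matrix.surjective_of_surjective_conj_map {ι R : Type*} [Fintype ι] [DecidableEq ι]
    [Nonempty ι] [Semiring R] {γ : R → R} {C C' : Matrix ι ι R} (hC : C' * C = 1)
    (h : Function.Surjective fun A : Matrix ι ι R ↦ C * A.map γ * C') :
    Function.Surjective γ := by
  obtain ⟨i⟩ := ‹Nonempty ι›
  intro d
  obtain ⟨A, hA⟩ := h (C * single i i d * C')
  have cancel (X : Matrix ι ι R) : C' * (C * X * C') * C = X := by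
    simp only [Matrix.mul_assoc, hC, Matrix.mul_one]
    rw [← Matrix.mul_assoc, hC, Matrix.one_mul]
  have hmap : A.map γ = single i i d := by
    rw [← cancel (A.map γ), ← cancel (single i i d)]
    exact congrArg (C' * · * C) hA
  exact ⟨A i i, by simpa using congr($hmap i i)⟩

/-- Every ring automorphism `σ` of `Mₙ(D)` over a skew field `D` decomposes as
`σ = Int(C) ∘ Mₙ(γ)`: there are a ring automorphism `γ` of `D` and an invertible
matrix `C` (with two-sided inverse `C'`) such that `σ A = C * (A.map γ) * C⁻¹`
for all `A`, where `Mₙ(γ)` is the entrywise application of `γ`. -/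
theorem matrix_ringAut_decomposition {D : Type*} [DivisionRing D] (n : ℕ)
    (σ : Matrix (Fin n) (Fin n) D ≃+* Matrix (Fin n) (Fin n) D) :
    ∃ (γ : D ≃+* D) (C C' : Matrix (Fin n) (Fin n) D),
      C * C' = 1 ∧ C' * C = 1 ∧
      ∀ A : Matrix (Fin n) (Fin n) D, σ A = C * A.map ⇑γ * C' := by
  cases isEmpty_or_nonempty (Fin n)
  · exact ⟨.refl D, 1, 1, mul_one 1, mul_one 1, fun _ ↦ Subsingleton.elim _ _⟩
  obtain ⟨i₀⟩ : Nonempty (Fin n) := inferInstance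
  obtain ⟨v, hv⟩ := σ.exists_isCornerEigenvector i₀
  obtain ⟨C', hCC'⟩ := hv.exists_mul_cornerMatrix_eq_one
  have hC'C : C' * cornerMatrix σ i₀ v = 1 := mul_eq_one_comm.mp hCC'
  have hσ (A : Matrix (Fin n) (Fin n) D) :
      σ A = cornerMatrix σ i₀ v * A.map hv.ringHom * C' := by
    rw [← hv.map_mul_cornerMatrix, mul_assoc, hCC', mul_one]
  have hγ : Function.Surjective hv.ringHom :=
    surjective_of_surjective_conj_map hC'C (funext hσ ▸ σ.surjective)
  exact ⟨.ofBijective hv.ringHom ⟨hv.ringHom.injective, hγ⟩, _, C', hCC', hC'C, hσ⟩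
end

section
/- Let R be a commutative ring complete with respect to a ring norm |·| satisfying |a−b| ≤ max(|a|,|b|), |ab| ≤ |a||b|, |1| = 1, |a| ≤ 1 for all a, and |a| = 0 iff a = 0. Fix a real constant u with 0 < u < 1 and let B(u) be the set of formal Laurent series Σ_{i∈ℤ} aᵢ tⁱ with aᵢ ∈ R and |aᵢ| uⁱ → 0 as i → −∞. Then B(u) is closed under the Cauchy product: if x = Σ aᵢtⁱ and y = Σ bᵢtⁱ lie in B(u), then cₘ = Σ_{n∈ℤ} aₙ b_{m−n} converges in R for each m, and Σ cₘ tᵐ lies in B(u); moreover |xy|_u ≤ |x|_u |y|_u where |Σ aᵢtⁱ|_u := sup_i |aᵢ|uⁱ. -/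
section Aux

variable {R : Type*} [CommRing R] (ν : R → ℝ)

theorem aux_nonneg
    (hν_nonarch : ∀ x y : R, ν (x - y) ≤ max (ν x) (ν y))
    (hν0 : ν 0 = 0) (x : R) : 0 ≤ ν x := by
  have h := hν_nonarch x x
  simp [hν0] at h
  exact h

theorem aux_neg
    (hν_nonarch : ∀ x y : R, ν (x - y) ≤ max (ν x) (ν y))
    (hν0 : ν 0 = 0) (x : R) : ν (-x) ≤ ν x := by
  have h := hν_nonarch 0 x
  rw [zero_sub] at h
  simpa [hν0, aux_nonneg ν hν_nonarch hν0 x] using h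

theorem aux_add
    (hν_nonarch : ∀ x y : R, ν (x - y) ≤ max (ν x) (ν y))
    (hν0 : ν 0 = 0) (x y : R) : ν (x + y) ≤ max (ν x) (ν y) := by
  have h := hν_nonarch x (-y)
  rw [sub_neg_eq_add] at h
  exact h.trans (max_le_max le_rfl (aux_neg ν hν_nonarch hν0 y))

theorem aux_sum_le
    (hν_nonarch : ∀ x y : R, ν (x - y) ≤ max (ν x) (ν y))
    (hν0 : ν 0 = 0)
    {ι : Type*} (F : Finset ι) (f : ι → R) (C : ℝ) (hC : 0 ≤ C)
    (h : ∀ i ∈ F, ν (f i) ≤ C) : ν (∑ i ∈ F, f i) ≤ C := by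
  induction F using Finset.cons_induction with
  | empty => simpa [hν0] using hC
  | cons i F hi ih =>
    rw [Finset.sum_cons]
    refine (aux_add ν hν_nonarch hν0 _ _).trans (max_le ?_ ?_)
    · exact h i (Finset.mem_cons_self i F)
    · exact ih fun j hj => h j (Finset.mem_cons_of_mem hj)

end Aux

/-- Let `R` be a commutative ring with a nonarchimedean ring norm `ν` under which it
is (sequentially) complete, with `ν a ≤ 1` for all `a`.  Fix `0 < u < 1` and let
`B(u)` be the set of formal Laurent series `Σ_{i ∈ ℤ} aᵢ tⁱ` with `ν(aᵢ)·uⁱ → 0` as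
`i → −∞`.  Then `B(u)` is closed under the Cauchy product: for `a, b ∈ B(u)` the
sums `cₘ = Σ_n aₙ b_{m−n}` converge in `R` (unconditionally, as nets over finite
subsets of `ℤ`), the family `c` again lies in `B(u)`, and `|c|_u ≤ |a|_u · |b|_u`
for the norms `|a|_u = sup_i ν(aᵢ)uⁱ`. -/
theorem laurent_cauchy_product {R : Type*} [CommRing R] (ν : R → ℝ)
    (hν_nonarch : ∀ x y : R, ν (x - y) ≤ max (ν x) (ν y))
    (hν_zero : ∀ x : R, ν x = 0 ↔ x = 0)
    (hν_mul : ∀ x y : R, ν (x * y) ≤ ν x * ν y)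
    (hν_one : ν 1 = 1)
    (hν_le_one : ∀ x : R, ν x ≤ 1)
    (hcomplete : ∀ f : ℕ → R,
      (∀ ε : ℝ, 0 < ε → ∃ N : ℕ, ∀ m ≥ N, ∀ n ≥ N, ν (f m - f n) < ε) →
      ∃ L : R, ∀ ε : ℝ, 0 < ε → ∃ N : ℕ, ∀ n ≥ N, ν (f n - L) < ε)
    (u : ℝ) (hu0 : 0 < u) (hu1 : u < 1)
    (a b : ℤ → R)
    (ha : ∀ ε : ℝ, 0 < ε → ∃ N : ℤ, ∀ i ≤ N, ν (a i) * u ^ i < ε)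
    (hb : ∀ ε : ℝ, 0 < ε → ∃ N : ℤ, ∀ i ≤ N, ν (b i) * u ^ i < ε) :
    ∃ c : ℤ → R,
      (∀ m : ℤ, ∀ ε : ℝ, 0 < ε → ∃ N : ℕ, ∀ F : Finset ℤ,
        Finset.Icc (-(N : ℤ)) (N : ℤ) ⊆ F →
        ν ((∑ n ∈ F, a n * b (m - n)) - c m) < ε) ∧
      (∀ ε : ℝ, 0 < ε → ∃ N : ℤ, ∀ m ≤ N, ν (c m) * u ^ m < ε) ∧
      (∀ m : ℤ, ν (c m) * u ^ m ≤
        (⨆ i : ℤ, ν (a i) * u ^ i) * (⨆ j : ℤ, ν (b j) * u ^ j)) := by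
  have hν0 : ν 0 = 0 := (hν_zero 0).mpr rfl
  have hνnn : ∀ x : R, 0 ≤ ν x := aux_nonneg ν hν_nonarch hν0
  have hνneg : ∀ x : R, ν (-x) ≤ ν x := aux_neg ν hν_nonarch hν0
  have hupos : ∀ i : ℤ, (0:ℝ) < u ^ i := fun i => zpow_pos hu0 i
  have hsum : ∀ (F : Finset ℤ) (f : ℤ → R) (C : ℝ), 0 ≤ C →
      (∀ i ∈ F, ν (f i) ≤ C) → ν (∑ i ∈ F, f i) ≤ C :=
    fun F f C hC h => aux_sum_le ν hν_nonarch hν0 F f C hC h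
  -- term bound
  have tb : ∀ m n : ℤ, ν (a n * b (m - n)) * u ^ m ≤
      (ν (a n) * u ^ n) * (ν (b (m - n)) * u ^ (m - n)) := by
    intro m n
    have h1 : u ^ m = u ^ n * u ^ (m - n) := by
      rw [← zpow_add₀ (ne_of_gt hu0)]; ring_nf
    calc ν (a n * b (m - n)) * u ^ m
        ≤ (ν (a n) * ν (b (m - n))) * u ^ m :=
          mul_le_mul_of_nonneg_right (hν_mul _ _) (hupos m).le
      _ = (ν (a n) * u ^ n) * (ν (b (m - n)) * u ^ (m - n)) := by rw [h1]; ring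
  -- global bounds
  have glob : ∀ f : ℤ → R, (∀ ε : ℝ, 0 < ε → ∃ N : ℤ, ∀ i ≤ N, ν (f i) * u ^ i < ε) →
      ∃ C : ℝ, 1 ≤ C ∧ ∀ i : ℤ, ν (f i) * u ^ i ≤ C := by
    intro f hf
    obtain ⟨N, hN⟩ := hf 1 one_pos
    refine ⟨u ^ (min N 0), ?_, ?_⟩
    · have := zpow_le_zpow_right_of_le_one₀ hu0 hu1.le (min_le_right N 0)
      simpa using this
    · intro i
      rcases le_or_gt i (min N 0) with h | h
      · refine (hN i (h.trans (min_le_left N 0))).le.trans ?_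
        have := zpow_le_zpow_right_of_le_one₀ hu0 hu1.le (min_le_right N 0)
        simpa using this
      · calc ν (f i) * u ^ i ≤ u ^ i :=
              mul_le_of_le_one_left (hupos i).le (hν_le_one _)
          _ ≤ u ^ (min N 0) := zpow_le_zpow_right_of_le_one₀ hu0 hu1.le h.le
  obtain ⟨A0, hA01, hA0⟩ := glob a ha
  obtain ⟨B0, hB01, hB0⟩ := glob b hb
  have hA0pos : (0:ℝ) < A0 := lt_of_lt_of_le one_pos hA01
  have hB0pos : (0:ℝ) < B0 := lt_of_lt_of_le one_pos hB01
  -- partial sums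
  set s : ℤ → ℕ → R := fun m N => ∑ n ∈ Finset.Icc (-(N:ℤ)) (N:ℤ), a n * b (m - n) with hs
  -- tail estimate
  have tail : ∀ m : ℤ, ∀ ε : ℝ, 0 < ε → ∃ K : ℕ, ∀ n : ℤ,
      n ∉ Finset.Icc (-(K:ℤ)) (K:ℤ) → ν (a n * b (m - n)) ≤ ε := by
    intro m ε hε
    obtain ⟨Na, hNa⟩ := ha ε hε
    obtain ⟨Nb, hNb⟩ := hb ε hε
    set Na' := min Na 0 with hNa'
    set Nb' := min Nb 0 with hNb'
    refine ⟨(max (-Na') (m - Nb')).toNat, ?_⟩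
    intro n hn
    rw [Finset.mem_Icc, not_and_or] at hn
    have hK : (max (-Na') (m - Nb') : ℤ) ≤ ((max (-Na') (m - Nb')).toNat : ℤ) :=
      Int.self_le_toNat _
    rcases hn with hn | hn
    · -- n < -K ≤ Na'
      push_neg at hn
      have hn' : n ≤ Na' := by
        have : -((max (-Na') (m - Nb')).toNat : ℤ) ≤ Na' := by
          have : (-Na' : ℤ) ≤ ((max (-Na') (m - Nb')).toNat : ℤ) :=
            le_trans (le_max_left _ _) hK
          omega
        omega
      have h1 : ν (a n) < ε := by
        have h2 := hNa n (hn'.trans (min_le_left _ _))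
        have h3 : (1:ℝ) ≤ u ^ n := by
          have := zpow_le_zpow_right_of_le_one₀ hu0 hu1.le (hn'.trans (min_le_right Na 0))
          simpa using this
        nlinarith [hνnn (a n)]
      calc ν (a n * b (m - n)) ≤ ν (a n) * ν (b (m - n)) := hν_mul _ _
        _ ≤ ν (a n) * 1 := mul_le_mul_of_nonneg_left (hν_le_one _) (hνnn _)
        _ = ν (a n) := mul_one _
        _ ≤ ε := h1.le
    · -- n > K ≥ m - Nb'
      push_neg at hn
      have hn' : m - n ≤ Nb' := by
        have : (m - Nb' : ℤ) ≤ ((max (-Na') (m - Nb')).toNat : ℤ) :=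
          le_trans (le_max_right _ _) hK
        omega
      have h1 : ν (b (m - n)) < ε := by
        have h2 := hNb (m - n) (hn'.trans (min_le_left _ _))
        have h3 : (1:ℝ) ≤ u ^ (m - n) := by
          have := zpow_le_zpow_right_of_le_one₀ hu0 hu1.le (hn'.trans (min_le_right Nb 0))
          simpa using this
        nlinarith [hνnn (b (m - n))]
      calc ν (a n * b (m - n)) ≤ ν (a n) * ν (b (m - n)) := hν_mul _ _
        _ ≤ 1 * ν (b (m - n)) := mul_le_mul_of_nonneg_right (hν_le_one _) (hνnn _)
        _ = ν (b (m - n)) := one_mul _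
        _ ≤ ε := h1.le
  -- difference of partial sums
  have hdiff : ∀ m : ℤ, ∀ K M N' : ℕ, K ≤ N' → N' ≤ M →
      (∀ n : ℤ, n ∉ Finset.Icc (-(K:ℤ)) (K:ℤ) → ν (a n * b (m - n)) ≤ 1 * 1) →
      True := fun _ _ _ _ _ _ _ => trivial
  have hsdiff : ∀ m : ℤ, ∀ (F : Finset ℤ) (N : ℕ),
      Finset.Icc (-(N:ℤ)) (N:ℤ) ⊆ F →
      (∑ n ∈ F, a n * b (m - n)) - s m N =
        ∑ n ∈ F \ Finset.Icc (-(N:ℤ)) (N:ℤ), a n * b (m - n) := by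
    intro m F N hF
    rw [hs]
    exact (Finset.sum_sdiff_eq_sub hF).symm
  -- Cauchy
  have hcauchy : ∀ m : ℤ, ∀ ε : ℝ, 0 < ε → ∃ N : ℕ, ∀ m' ≥ N, ∀ n' ≥ N,
      ν (s m m' - s m n') < ε := by
    intro m ε hε
    obtain ⟨K, hK⟩ := tail m (ε/2) (half_pos hε)
    refine ⟨K, ?_⟩
    have key : ∀ M N' : ℕ, K ≤ N' → N' ≤ M → ν (s m M - s m N') ≤ ε/2 := by
      intro M N' hKN hNM
      have hsub : Finset.Icc (-(N':ℤ)) (N':ℤ) ⊆ Finset.Icc (-(M:ℤ)) (M:ℤ) := by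
        apply Finset.Icc_subset_Icc <;> omega
      rw [show s m M - s m N' =
          ∑ n ∈ Finset.Icc (-(M:ℤ)) (M:ℤ) \ Finset.Icc (-(N':ℤ)) (N':ℤ),
            a n * b (m - n) from (Finset.sum_sdiff_eq_sub hsub).symm]
      refine hsum _ _ (ε/2) (half_pos hε).le ?_
      intro n hn
      rw [Finset.mem_sdiff] at hn
      refine hK n fun hmem => hn.2 ?_
      refine Finset.Icc_subset_Icc ?_ ?_ hmem <;> omega
    intro m' hm' n' hn'
    rcases le_total n' m' with h | h
    · exact lt_of_le_of_lt (key m' n' hn' h) (half_lt_self hε)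
    · have := key n' m' hm' h
      have h2 : ν (s m m' - s m n') ≤ ν (s m n' - s m m') := by
        have := hνneg (s m n' - s m m')
        rwa [neg_sub] at this
      exact lt_of_le_of_lt (h2.trans this) (half_lt_self hε)
  have hexists : ∀ m : ℤ, ∃ L : R, ∀ ε : ℝ, 0 < ε → ∃ N : ℕ, ∀ n ≥ N,
      ν (s m n - L) < ε := fun m => hcomplete (s m) (hcauchy m)
  choose c hc using hexists
  refine ⟨c, ?_, ?_, ?_⟩
  · -- net convergence
    intro m ε hε
    obtain ⟨K, hK⟩ := tail m (ε/2) (half_pos hε)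
    obtain ⟨N₁, hN₁⟩ := hc m (ε/2) (half_pos hε)
    refine ⟨max K N₁, ?_⟩
    intro F hF
    set N := max K N₁ with hN
    have key : (∑ n ∈ F, a n * b (m - n)) - c m =
        ((∑ n ∈ F, a n * b (m - n)) - s m N) + (s m N - c m) := by ring
    rw [key]
    refine lt_of_le_of_lt (aux_add ν hν_nonarch hν0 _ _) (max_lt ?_ ?_)
    · rw [hsdiff m F N hF]
      refine lt_of_le_of_lt (hsum _ _ (ε/2) (half_pos hε).le ?_) (half_lt_self hε)
      intro n hn
      rw [Finset.mem_sdiff] at hn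
      refine hK n fun hmem => hn.2 ?_
      refine Finset.Icc_subset_Icc ?_ ?_ hmem <;>
        · have : (K:ℤ) ≤ (N:ℤ) := by exact_mod_cast le_max_left K N₁
          omega
    · exact lt_trans (hN₁ N (le_max_right K N₁)) (half_lt_self hε)
  · -- decay of c
    intro ε hε
    have hεa : (0:ℝ) < ε / (2 * B0) := by positivity
    have hεb : (0:ℝ) < ε / (2 * A0) := by positivity
    obtain ⟨Na, hNa⟩ := ha (ε / (2 * B0)) hεa
    obtain ⟨Nb, hNb⟩ := hb (ε / (2 * A0)) hεb
    refine ⟨Na + Nb, ?_⟩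
    intro m hm
    -- every term is small
    have hterm : ∀ n : ℤ, ν (a n * b (m - n)) * u ^ m ≤ ε / 2 := by
      intro n
      refine (tb m n).trans ?_
      rcases le_or_gt n Na with h | h
      · have h1 : ν (a n) * u ^ n < ε / (2 * B0) := hNa n h
        have h2 : ν (b (m - n)) * u ^ (m - n) ≤ B0 := hB0 _
        have h3 : 0 ≤ ν (b (m - n)) * u ^ (m - n) :=
          mul_nonneg (hνnn _) (hupos _).le
        calc (ν (a n) * u ^ n) * (ν (b (m - n)) * u ^ (m - n))
            ≤ (ε / (2 * B0)) * B0 := by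
              apply mul_le_mul h1.le h2 h3 hεa.le
          _ = ε / 2 := by field_simp
      · have hmn : m - n ≤ Nb := by omega
        have h1 : ν (b (m - n)) * u ^ (m - n) < ε / (2 * A0) := hNb _ hmn
        have h2 : ν (a n) * u ^ n ≤ A0 := hA0 _
        have h3 : 0 ≤ ν (a n) * u ^ n := mul_nonneg (hνnn _) (hupos _).le
        calc (ν (a n) * u ^ n) * (ν (b (m - n)) * u ^ (m - n))
            ≤ A0 * (ε / (2 * A0)) := mul_le_mul h2 h1.le
              (mul_nonneg (hνnn _) (hupos _).le) hA0pos.le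
          _ = ε / 2 := by field_simp
    have hsN : ∀ N : ℕ, ν (s m N) ≤ (ε / 2) / u ^ m := by
      intro N
      refine hsum _ _ _ (by positivity) ?_
      intro n _
      rw [le_div_iff₀ (hupos m)]
      exact hterm n
    obtain ⟨N, hN⟩ := hc m ((ε / 2) / u ^ m) (by positivity)
    have hcm : ν (c m) ≤ (ε / 2) / u ^ m := by
      have heq : c m = s m N - (s m N - c m) := by ring
      rw [heq]
      refine (hν_nonarch _ _).trans (max_le (hsN N) ?_)
      exact (hN N le_rfl).le
    have : ν (c m) * u ^ m ≤ ε / 2 := by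
      rw [← le_div_iff₀ (hupos m)]
      exact hcm
    exact lt_of_le_of_lt this (half_lt_self hε)
  · -- norm bound
    intro m
    set A := ⨆ i : ℤ, ν (a i) * u ^ i with hA
    set B := ⨆ j : ℤ, ν (b j) * u ^ j with hB
    have bddA : BddAbove (Set.range fun i : ℤ => ν (a i) * u ^ i) :=
      ⟨A0, by rintro x ⟨i, rfl⟩; exact hA0 i⟩
    have bddB : BddAbove (Set.range fun j : ℤ => ν (b j) * u ^ j) :=
      ⟨B0, by rintro x ⟨j, rfl⟩; exact hB0 j⟩
    have hAi : ∀ i : ℤ, ν (a i) * u ^ i ≤ A := fun i => le_ciSup bddA i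
    have hBj : ∀ j : ℤ, ν (b j) * u ^ j ≤ B := fun j => le_ciSup bddB j
    have hAnn : 0 ≤ A := le_trans (mul_nonneg (hνnn (a 0)) (hupos 0).le) (hAi 0)
    have hBnn : 0 ≤ B := le_trans (mul_nonneg (hνnn (b 0)) (hupos 0).le) (hBj 0)
    refine le_of_forall_pos_le_add ?_
    intro ε hε
    have hsN : ∀ N : ℕ, ν (s m N) ≤ (A * B) / u ^ m := by
      intro N
      refine hsum _ _ _ (by positivity) ?_
      intro n _
      rw [le_div_iff₀ (hupos m)]
      refine (tb m n).trans ?_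
      exact mul_le_mul (hAi n) (hBj (m - n)) (mul_nonneg (hνnn _) (hupos _).le) hAnn
    obtain ⟨N, hN⟩ := hc m (ε / u ^ m) (by positivity)
    have hcm : ν (c m) ≤ (A * B + ε) / u ^ m := by
      have heq : c m = s m N - (s m N - c m) := by ring
      rw [heq]
      refine (hν_nonarch _ _).trans (max_le ?_ ?_)
      · exact (hsN N).trans (by gcongr; linarith)
      · exact (hN N le_rfl).le.trans (by gcongr; nlinarith [mul_nonneg hAnn hBnn])
    calc ν (c m) * u ^ m ≤ ((A * B + ε) / u ^ m) * u ^ m :=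
          mul_le_mul_of_nonneg_right hcm (hupos m).le
      _ = A * B + ε := div_mul_cancel₀ _ (ne_of_gt (hupos m))
end
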